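/- Let P_{m,k} be a generalized Petersen graph (m ≥ 3, k ≥ 1) of order 2m and T a tree of order n; let d_p = diam(P_{m,k}), d_t = diam(T), ε = ε(T). Suppose there exists an ordering z_0, z_1, …, z_{2mn−1} of the vertices of P_{m,k} □ T, with z_t = (x_{i_t}, y_{j_t}), such that: (a) d_{P_{m,k}}(x_{i_t}, x_{i_{t+1}}) = d_p for all 0 ≤ t ≤ 2mn − 2; (b) L_T(y_{j_0}) + L_T(y_{j_{2mn−1}}) = 0; and (c) for all 0 ≤ a < b ≤ 2mn − 1, d_T(y_{j_a}, y_{j_b}) + d_{P_{m,k}}(x_{i_a}, x_{i_b}) ≥ ∑_{t=a}^{b−1} (L_T(y_{j_t}) + L_T(y_{j_{t+1}}) − d_t − ε) + d_t + d_p + 1. Then rn(P_{m,k} □ T) = (2mn − 1)(d_t + ε) − 4m·L(T). -/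

import Mathlib

/-!
Common definitions: radio labelings, weight centers, levels, branches,
generalized Petersen graphs, stars.
-/

open Finset

namespace RadioPaper

variable {V : Type*}

/-- The diameter of a finite graph: the maximum distance between two vertices. -/
noncomputable def graphDiam [Fintype V] (G : SimpleGraph V) : ℕ :=
  Finset.univ.sup fun p : V × V => G.dist p.1 p.2

/-- A radio labeling of `G`: `|f u - f v| ≥ diam G + 1 - d(u,v)` for distinct `u, v`. -/
def IsRadioLabeling [Fintype V] (G : SimpleGraph V) (f : V → ℕ) : Prop :=
  ∀ u v : V, u ≠ v → (graphDiam G : ℤ) + 1 - G.dist u v ≤ |(f u : ℤ) - (f v : ℤ)|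

/-- The span of a labeling: the maximum of `|f u - f v|` over all pairs of vertices. -/
noncomputable def radioSpan [Fintype V] (f : V → ℕ) : ℕ :=
  Finset.univ.sup fun p : V × V => f p.1 - f p.2

/-- The radio number of `G`: the minimum span over all radio labelings. -/
noncomputable def radioNumber [Fintype V] (G : SimpleGraph V) : ℕ :=
  sInf {s : ℕ | ∃ f : V → ℕ, IsRadioLabeling G f ∧ radioSpan f = s}

/-- The weight of a graph at a vertex `u`: the sum of distances from `u` to all vertices. -/
noncomputable def weight [Fintype V] (T : SimpleGraph V) (u : V) : ℕ :=
  ∑ v : V, T.dist u v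

/-- The set of weight centers: vertices minimizing the weight. -/
def weightCenters [Fintype V] (T : SimpleGraph V) : Set V :=
  {c | ∀ u : V, weight T c ≤ weight T u}

/-- The level of a vertex: its distance to a nearest weight center. -/
noncomputable def level [Fintype V] (T : SimpleGraph V) (x : V) : ℕ :=
  sInf {d : ℕ | ∃ w ∈ weightCenters T, T.dist x w = d}

/-- The total level of `T`: sum of the levels of all vertices. -/
noncomputable def totalLevel [Fintype V] (T : SimpleGraph V) : ℕ :=
  ∑ x : V, level T x

/-- `ε(T) = 1` if `T` has a unique weight center, and `0` otherwise (two centers). -/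
noncomputable def eps [Fintype V] (T : SimpleGraph V) : ℕ :=
  if (weightCenters T).ncard = 1 then 1 else 0

/-- `z` is an ancestor of `x` in the tree rooted at its weight center(s):
`z` lies on the path from some weight center to `x`. -/
def IsAncestor [Fintype V] (T : SimpleGraph V) (z x : V) : Prop :=
  ∃ w ∈ weightCenters T, T.dist w z + T.dist z x = T.dist w x

/-- `φ_T(x,y)`: the maximum level of a common ancestor of `x` and `y`. -/
noncomputable def phi [Fintype V] (T : SimpleGraph V) (x y : V) : ℕ :=
  sSup {l : ℕ | ∃ z : V, IsAncestor T z x ∧ IsAncestor T z y ∧ level T z = l}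

/-- `x` and `y` are in opposite branches: `T` has two weight centers `w, w'` and
`x, y` lie in different components of `T - ww'`. -/
def OppositeBranches [Fintype V] (T : SimpleGraph V) (x y : V) : Prop :=
  ∃ w w' : V, w ≠ w' ∧ weightCenters T = {w, w'} ∧
    ¬ (T.deleteEdges {s(w, w')}).Reachable x y

open Classical in
/-- `δ_T(x,y) = 1` if `T` has two weight centers and `x, y` are in opposite branches,
and `0` otherwise. -/
noncomputable def delta [Fintype V] (T : SimpleGraph V) (x y : V) : ℕ :=
  if (weightCenters T).ncard = 2 ∧ OppositeBranches T x y then 1 else 0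

/-- `x` and `y` are in different branches: some weight center lies on the `x`–`y` path
(equivalently, the paths from the center to `x` and to `y` depart through different
neighbours, or one of `x, y` is a weight center). -/
def DifferentBranches [Fintype V] (T : SimpleGraph V) (x y : V) : Prop :=
  ∃ w ∈ weightCenters T, T.dist x w + T.dist w y = T.dist x y

/-- `x` and `y` are in the same branch: both belong to the branch of `T` induced by some
non-central neighbour `u` of a weight center `w` together with all of `u`'s descendants. -/
def SameBranch [Fintype V] (T : SimpleGraph V) (x y : V) : Prop :=
  ∃ w ∈ weightCenters T, ∃ u : V, u ∉ weightCenters T ∧ T.Adj w u ∧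
    T.dist w x = 1 + T.dist u x ∧ T.dist w y = 1 + T.dist u y

/-- The generalized Petersen graph `P_{m,k}`: outer vertices `(false, i)` (the `u_i`) and
inner vertices `(true, i)` (the `v_i`), with edges `u_i u_{i+1}`, `u_i v_i`, `v_i v_{i+k}`. -/
def genPetersen (m k : ℕ) : SimpleGraph (Bool × ZMod m) :=
  SimpleGraph.fromRel fun a b =>
    (a.1 = false ∧ b.1 = false ∧ b.2 = a.2 + 1) ∨
    (a.1 = false ∧ b.1 = true ∧ a.2 = b.2) ∨
    (a.1 = true ∧ b.1 = true ∧ b.2 = a.2 + (k : ZMod m))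

/-- The star `K_{1,n}`: vertex `0` is the centre, joined to the `n` leaves. -/
def starGraph (n : ℕ) : SimpleGraph (Fin (n + 1)) :=
  SimpleGraph.fromRel fun a _ => a = 0


/-! ### Auxiliary lemmas -/

section AuxLemmas

open SimpleGraph

lemma dist_le_graphDiam [Fintype V] (G : SimpleGraph V) (u v : V) :
    G.dist u v ≤ graphDiam G :=
  Finset.le_sup (f := fun p : V × V => G.dist p.1 p.2) (Finset.mem_univ (u, v))

lemma length_one_of_adj {G : SimpleGraph V} {u v : V} (h : G.Adj u v) :
    G.dist u v = 1 := by
  have h1 : G.dist u v ≤ 1 := by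
    simpa using SimpleGraph.dist_le (SimpleGraph.Walk.cons h SimpleGraph.Walk.nil)
  have h0 : G.dist u v ≠ 0 := by
    rw [ne_eq, h.reachable.dist_eq_zero_iff]
    exact h.ne
  omega

lemma exists_walk_to_getVert {G : SimpleGraph V} :
    ∀ {u v : V} (w : G.Walk u v) (i : ℕ), ∃ q : G.Walk u (w.getVert i), q.length ≤ i := by
  intro u v w
  induction w with
  | nil => intro i; exact ⟨(SimpleGraph.Walk.nil).copy rfl (by simp [SimpleGraph.Walk.getVert]), by simp⟩
  | cons h p ih =>
    intro i
    cases i with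
    | zero => exact ⟨(SimpleGraph.Walk.nil).copy rfl (by simp [SimpleGraph.Walk.getVert]), (SimpleGraph.Walk.length_copy _ _ _).le⟩
    | succ n =>
      obtain ⟨q, hq⟩ := ih n
      exact ⟨(SimpleGraph.Walk.cons h q).copy rfl (by simp [SimpleGraph.Walk.getVert_cons_succ]),
        by simpa using Nat.succ_le_succ hq⟩

lemma dist_getVert_le {G : SimpleGraph V} {u v : V} (w : G.Walk u v) (i : ℕ) :
    G.dist u (w.getVert i) ≤ i := by
  obtain ⟨q, hq⟩ := exists_walk_to_getVert w i
  exact le_trans (SimpleGraph.dist_le q) hq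

variable {T : SimpleGraph V}

lemma concat_isPath {x a b : V} {p : T.Walk x a} (hp : p.IsPath) (h : T.Adj a b)
    (hb : b ∉ p.support) : (p.concat h).IsPath := by
  rw [SimpleGraph.Walk.isPath_def, SimpleGraph.Walk.support_concat]
  refine List.Nodup.append (hp.support_nodup) (by simp) ?_
  intro c hc hc'
  simp at hc'
  subst hc'
  exact hb hc

lemma getVert_concat_length {x a b : V} (p : T.Walk x a) (h : T.Adj a b) :
    (p.concat h).getVert p.length = a := by
  rw [SimpleGraph.Walk.concat, SimpleGraph.Walk.getVert_append]
  simp [SimpleGraph.Walk.getVert]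

lemma tree_dist_ne (hT : T.IsTree) {a b : V} (h : T.Adj a b) (x : V) :
    T.dist x a ≠ T.dist x b := by
  intro heq
  set nn := T.dist x a with hnn
  obtain ⟨Qa, hQal⟩ := hT.isConnected.exists_walk_length_eq_dist x a
  obtain ⟨Qb, hQbl⟩ := hT.isConnected.exists_walk_length_eq_dist x b
  have hQa : Qa.IsPath := Qa.isPath_of_length_eq_dist hQal
  have hQb : Qb.IsPath := Qb.isPath_of_length_eq_dist hQbl
  have hbmem : b ∉ Qa.support := by
    intro hmem
    obtain ⟨i, hgivi, hile⟩ := SimpleGraph.Walk.mem_support_iff_exists_getVert.mp hmem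
    have h1 : T.dist x b ≤ i := by rw [← hgivi]; exact dist_getVert_le Qa i
    have h2 : i = Qa.length := by omega
    rw [h2, SimpleGraph.Walk.getVert_length] at hgivi
    exact h.ne hgivi
  have hP1 : (Qa.concat h).IsPath := concat_isPath hQa h hbmem
  have := (hT.existsUnique_path x b).unique hP1 hQb
  have hlen := congrArg SimpleGraph.Walk.length this
  rw [SimpleGraph.Walk.length_concat] at hlen
  omega

lemma tree_dist_step (hT : T.IsTree) {a b : V} (h : T.Adj a b) (x : V) :
    T.dist x b = T.dist x a + 1 ∨ T.dist x a = T.dist x b + 1 := by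
  have h1 : T.dist x b ≤ T.dist x a + 1 := by
    have := hT.isConnected.dist_triangle (u := x) (v := a) (w := b)
    have hab : T.dist a b = 1 := length_one_of_adj h
    omega
  have h2 : T.dist x a ≤ T.dist x b + 1 := by
    have := hT.isConnected.dist_triangle (u := x) (v := b) (w := a)
    have hab : T.dist b a = 1 := length_one_of_adj h.symm
    omega
  have := tree_dist_ne hT h x
  omega

lemma tree_no_turn (hT : T.IsTree) {a b c x : V} (hab : T.Adj a b) (hbc : T.Adj b c)
    (hac : a ≠ c) (h1 : T.dist x b = T.dist x a + 1) :
    T.dist x c = T.dist x b + 1 := by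
  rcases tree_dist_step hT hbc x with h | h
  · exact h
  · exfalso
    set nn := T.dist x a with hnn
    have hxc : T.dist x c = nn := by omega
    obtain ⟨Qa, hQal⟩ := hT.isConnected.exists_walk_length_eq_dist x a
    obtain ⟨Qc, hQcl⟩ := hT.isConnected.exists_walk_length_eq_dist x c
    have hQa : Qa.IsPath := Qa.isPath_of_length_eq_dist hQal
    have hQc : Qc.IsPath := Qc.isPath_of_length_eq_dist hQcl
    rw [← hnn] at hQal
    rw [hxc] at hQcl
    have hbQa : b ∉ Qa.support := by
      intro hmem
      obtain ⟨i, hgivi, hile⟩ := SimpleGraph.Walk.mem_support_iff_exists_getVert.mp hmem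
      have : T.dist x b ≤ i := by rw [← hgivi]; exact dist_getVert_le Qa i
      omega
    have hbQc : b ∉ Qc.support := by
      intro hmem
      obtain ⟨i, hgivi, hile⟩ := SimpleGraph.Walk.mem_support_iff_exists_getVert.mp hmem
      have : T.dist x b ≤ i := by rw [← hgivi]; exact dist_getVert_le Qc i
      omega
    have hP1 : (Qa.concat hab).IsPath := concat_isPath hQa hab hbQa
    have hP2 : (Qc.concat hbc.symm).IsPath := concat_isPath hQc hbc.symm hbQc
    have hEq := (hT.existsUnique_path x b).unique hP1 hP2
    have hga := getVert_concat_length Qa hab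
    have hgc := getVert_concat_length Qc hbc.symm
    rw [hQal] at hga
    rw [hQcl] at hgc
    have := congrArg (fun w => SimpleGraph.Walk.getVert w nn) hEq
    rw [hga, hgc] at this
    exact hac this

lemma tree_centers_adj [Fintype V] (hT : T.IsTree) {w w' : V}
    (hw : ∀ u, weight T w ≤ weight T u) (hw' : ∀ u, weight T w' ≤ weight T u)
    (hne : w ≠ w') : T.Adj w w' := by
  by_contra hadj
  set r := T.dist w w' with hr
  have hr0 : r ≠ 0 := by
    rw [hr, ne_eq, (hT.isConnected w w').dist_eq_zero_iff]
    exact hne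
  obtain ⟨W, hWl⟩ := hT.isConnected.exists_walk_length_eq_dist w w'
  rw [← hr] at hWl
  have hr1 : r ≠ 1 := by
    intro h1
    apply hadj
    have h0 : W.getVert 0 = w := W.getVert_zero
    have hl : W.getVert 1 = w' := by
      rw [← h1, ← hWl]; exact W.getVert_length
    have := W.adj_getVert_succ (i := 0) (by omega)
    rwa [h0, hl] at this
  have hr2 : 2 ≤ r := by omega
  set p : ℕ → V := fun j => W.getVert j with hp
  have hp0 : p 0 = w := W.getVert_zero
  have hpr : p r = w' := by rw [hp]; simp only [← hWl]; exact W.getVert_length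
  have hadjp : ∀ j, j < r → T.Adj (p j) (p (j + 1)) := by
    intro j hj
    exact W.adj_getVert_succ (by omega)
  have hdl : ∀ j, T.dist w (p j) ≤ j := fun j => dist_getVert_le W j
  have hdr : ∀ j, j ≤ r → T.dist (p j) w' ≤ r - j := by
    intro j hj
    have h := dist_getVert_le W.reverse (r - j)
    rw [SimpleGraph.Walk.getVert_reverse] at h
    have : W.length - (r - j) = j := by omega
    rw [this] at h
    rwa [SimpleGraph.dist_comm] at h
  have hdeq : ∀ j, j ≤ r → T.dist w (p j) = j := by
    intro j hj
    have ht := hT.isConnected.dist_triangle (u := w) (v := p j) (w := w')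
    have h1 := hdl j
    have h2 := hdr j hj
    omega
  have hpne : ∀ j, j + 2 ≤ r → p j ≠ p (j + 2) := by
    intro j hj heq
    have h1 := hdeq j (by omega)
    have h2 := hdeq (j + 2) hj
    rw [heq] at h1
    omega
  set t : ℕ → V → ℤ := fun j x => (T.dist x (p (j + 1)) : ℤ) - T.dist x (p j) with htdef
  have htval : ∀ j, j + 1 ≤ r → ∀ x, t j x = 1 ∨ t j x = -1 := by
    intro j hj x
    rcases tree_dist_step hT (hadjp j (by omega)) x with h | h
    · left; simp only [htdef]; rw [h]; push_cast; ring
    · right; simp only [htdef]; rw [h]; push_cast; ring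
  have htmono1 : ∀ j, j + 2 ≤ r → ∀ x, t j x = 1 → t (j + 1) x = 1 := by
    intro j hj x h1
    have hd1 : T.dist x (p (j + 1)) = T.dist x (p j) + 1 := by
      have : (T.dist x (p (j + 1)) : ℤ) = T.dist x (p j) + 1 := by
        have := h1; simp only [htdef] at this; linarith
      exact_mod_cast this
    have := tree_no_turn hT (hadjp j (by omega)) (hadjp (j + 1) (by omega)) (hpne j hj) hd1
    simp only [htdef]
    rw [this]; push_cast; ring
  have htle : ∀ (x : V) (j j' : ℕ), j ≤ j' → j' + 1 ≤ r → t j x ≤ t j' x := by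
    intro x j j' hjj' hj'r
    induction j' with
    | zero => have : j = 0 := by omega
              subst this; exact le_refl _
    | succ n ih =>
      rcases Nat.lt_or_ge j (n + 1) with hlt | hge
      · have h1 : t j x ≤ t n x := ih (by omega) (by omega)
        rcases htval n (by omega) x with h | h
        · have h2 := htmono1 n (by omega) x h
          rw [h2, ← h]; exact h1
        · have h3 : (-1 : ℤ) ≤ t (n + 1) x := by
            rcases htval (n + 1) (by omega) x with h2 | h2 <;> omega
          omega
      · have : j = n + 1 := by omega
        subst this; exact le_refl _
  have hwsum : ∀ j : ℕ, (weight T (p (j + 1)) : ℤ) - weight T (p j) = ∑ x : V, t j x := by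
    intro j
    simp only [weight, htdef]
    push_cast
    rw [Finset.sum_sub_distrib]
    congr 1 <;> exact Finset.sum_congr rfl (fun x _ => by rw [SimpleGraph.dist_comm])
  have hg0 : (0 : ℤ) ≤ ∑ x : V, t 0 x := by
    have hws := hwsum 0
    rw [hp0] at hws
    have hle : (weight T w : ℤ) ≤ weight T (p 1) := by exact_mod_cast hw (p 1)
    linarith
  have hT0 : t 0 (p 1) = -1 := by
    have d01 : T.dist (p 1) (p 0) = 1 := by
      rw [SimpleGraph.dist_comm]; exact length_one_of_adj (hadjp 0 (by omega))
    have d11 : T.dist (p 1) (p 1) = 0 := SimpleGraph.dist_self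
    simp only [htdef]
    rw [show (0:ℕ) + 1 = 1 from rfl, d01, d11]
    norm_num
  have hT1 : t 1 (p 1) = 1 := by
    have d12 : T.dist (p 1) (p (1 + 1)) = 1 := length_one_of_adj (hadjp 1 (by omega))
    have d11 : T.dist (p 1) (p 1) = 0 := SimpleGraph.dist_self
    simp only [htdef]
    rw [d12, d11]
    norm_num
  have hg1 : (2 : ℤ) ≤ ∑ x : V, t 1 x := by
    have hsum : t 1 (p 1) - t 0 (p 1) ≤ ∑ x : V, (t 1 x - t 0 x) :=
      Finset.single_le_sum (f := fun x => t 1 x - t 0 x)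
        (fun x _ => by have := htle x 0 1 (by omega) (by omega); linarith)
        (Finset.mem_univ (p 1))
    rw [Finset.sum_sub_distrib] at hsum
    rw [hT0, hT1] at hsum
    linarith
  have hgj : ∀ j, 1 ≤ j → j + 1 ≤ r → (2 : ℤ) ≤ ∑ x : V, t j x := by
    intro j h1 h2
    calc (2:ℤ) ≤ ∑ x : V, t 1 x := hg1
    _ ≤ ∑ x : V, t j x := Finset.sum_le_sum (fun x _ => htle x 1 j h1 h2)
  have htel : (weight T (p r) : ℤ) - weight T (p 0) = ∑ j ∈ Finset.range r, ∑ x : V, t j x := by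
    rw [← Finset.sum_range_sub (f := fun j => (weight T (p j) : ℤ))]
    exact Finset.sum_congr rfl fun j _ => hwsum j
  have hbig : (2 : ℤ) * ((r : ℤ) - 1) ≤ ∑ j ∈ Finset.range r, ∑ x : V, t j x := by
    have hrw : r = (r - 1) + 1 := by omega
    rw [hrw, Finset.sum_range_succ' (fun j => ∑ x : V, t j x) (r - 1)]
    have hterm : ∀ i ∈ Finset.range (r - 1), (2:ℤ) ≤ ∑ x : V, t (i + 1) x := by
      intro i hi
      rw [Finset.mem_range] at hi
      exact hgj (i + 1) (by omega) (by omega)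
    have h1 : ((r:ℤ) - 1) * 2 ≤ ∑ i ∈ Finset.range (r - 1), ∑ x : V, t (i + 1) x := by
      have := Finset.sum_le_sum hterm
      rw [Finset.sum_const, Finset.card_range] at this
      have hcast : ((r - 1 : ℕ) : ℤ) = (r : ℤ) - 1 := by push_cast [Nat.cast_sub (by omega : 1 ≤ r)]; ring
      rw [nsmul_eq_mul, hcast] at this
      linarith
    have hc : ((r - 1 + 1 : ℕ) : ℤ) = (r : ℤ) := by congr 1; omega
    rw [hc]
    linarith
  have hle0 : (weight T (p r) : ℤ) - weight T (p 0) ≤ 0 := by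
    rw [hp0, hpr]
    have : (weight T w' : ℤ) ≤ weight T w := by exact_mod_cast hw' w
    linarith
  rw [htel] at hle0
  have hrz : (2:ℤ) ≤ (r:ℤ) := by exact_mod_cast hr2
  linarith

lemma exists_weightCenter [Fintype V] [Nonempty V] (T : SimpleGraph V) :
    ∃ c, c ∈ weightCenters T := by
  obtain ⟨c, hc⟩ := Finite.exists_min (weight T)
  exact ⟨c, hc⟩

lemma exists_level_realizer [Fintype V] [Nonempty V] (T : SimpleGraph V) (x : V) :
    ∃ w ∈ weightCenters T, T.dist x w = level T x := by
  have hne : {d : ℕ | ∃ w ∈ weightCenters T, T.dist x w = d}.Nonempty := by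
    obtain ⟨c, hc⟩ := exists_weightCenter T
    exact ⟨T.dist x c, c, hc, rfl⟩
  exact Nat.sInf_mem hne

lemma dist_le_level_add [Fintype V] [Nonempty V] {T : SimpleGraph V} (hT : T.IsTree) (x y : V) :
    (T.dist x y : ℤ) ≤ level T x + level T y + 1 - eps T := by
  obtain ⟨wx, hwx, hdx⟩ := exists_level_realizer T x
  obtain ⟨wy, hwy, hdy⟩ := exists_level_realizer T y
  have htri : T.dist x y ≤ T.dist x wx + T.dist wx wy + T.dist wy y := by
    have t1 := hT.isConnected.dist_triangle (u := x) (v := wx) (w := y)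
    have t2 := hT.isConnected.dist_triangle (u := wx) (v := wy) (w := y)
    omega
  rw [SimpleGraph.dist_comm (u := wy) (v := y)] at htri
  rw [eps]
  split_ifs with h
  · obtain ⟨c, hcs⟩ := Set.ncard_eq_one.mp h
    have hx : wx = c := by rw [hcs] at hwx; exact hwx
    have hy : wy = c := by rw [hcs] at hwy; exact hwy
    have hww : T.dist wx wy = 0 := by rw [hx, hy, SimpleGraph.dist_self]
    rw [hww] at htri
    rw [← hdx, ← hdy]
    push_cast
    omega
  · by_cases hxy : wx = wy
    · have hww : T.dist wx wy = 0 := by rw [hxy, SimpleGraph.dist_self]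
      rw [hww] at htri
      rw [← hdx, ← hdy]
      push_cast
      omega
    · have hadj : T.Adj wx wy := tree_centers_adj hT hwx hwy hxy
      have hww : T.dist wx wy = 1 := length_one_of_adj hadj
      rw [hww] at htri
      rw [← hdx, ← hdy]
      push_cast
      omega

lemma genPetersen_connected {m k : ℕ} [NeZero m] (hm : 3 ≤ m) :
    (genPetersen m k).Connected := by
  haveI : Fact (1 < m) := ⟨by omega⟩
  have hone : (1 : ZMod m) ≠ 0 := one_ne_zero
  have houter : ∀ i : ZMod m, (genPetersen m k).Adj (false, i) (false, i + 1) := by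
    intro i
    rw [genPetersen, SimpleGraph.fromRel_adj]
    refine ⟨?_, Or.inl (Or.inl ⟨rfl, rfl, rfl⟩)⟩
    simp only [ne_eq, Prod.mk.injEq, not_and]
    intro _
    intro h
    exact hone (by linear_combination -h)
  have hspoke : ∀ i : ZMod m, (genPetersen m k).Adj (false, i) (true, i) := by
    intro i
    rw [genPetersen, SimpleGraph.fromRel_adj]
    exact ⟨by simp, Or.inl (Or.inr (Or.inl ⟨rfl, rfl, rfl⟩))⟩
  have hnat : ∀ j : ℕ, (genPetersen m k).Reachable (false, 0) (false, (j : ZMod m)) := by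
    intro j
    induction j with
    | zero => simpa using SimpleGraph.Reachable.refl ((false : Bool), (0 : ZMod m))
    | succ n ih =>
      refine ih.trans ?_
      push_cast
      exact (houter (n : ZMod m)).reachable
  have hreach : ∀ x : Bool × ZMod m, (genPetersen m k).Reachable (false, 0) x := by
    rintro ⟨b, i⟩
    obtain ⟨j, rfl⟩ := ZMod.natCast_zmod_surjective i
    cases b with
    | false => exact hnat j
    | true => exact (hnat j).trans (hspoke _).reachable
  constructor
  intro x y
  exact (hreach x).symm.trans (hreach y)

section BoxProd
variable {α β : Type*} {G : SimpleGraph α} {H : SimpleGraph β}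

lemma boxProd_walk_proj :
    ∀ {x y : α × β} (w : (G □ H).Walk x y),
      ∃ (w1 : G.Walk x.1 y.1) (w2 : H.Walk x.2 y.2), w1.length + w2.length = w.length := by
  intro x y w
  induction w with
  | nil => exact ⟨SimpleGraph.Walk.nil, SimpleGraph.Walk.nil, rfl⟩
  | @cons u z v h p ih =>
    obtain ⟨w1, w2, hlen⟩ := ih
    rcases SimpleGraph.boxProd_adj.mp h with ⟨ha, he⟩ | ⟨ha, he⟩
    · exact ⟨SimpleGraph.Walk.cons ha w1, w2.copy he.symm rfl,
        by simp [SimpleGraph.Walk.length_cons, SimpleGraph.Walk.length_copy]; omega⟩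
    · exact ⟨w1.copy he.symm rfl, SimpleGraph.Walk.cons ha w2,
        by simp [SimpleGraph.Walk.length_cons, SimpleGraph.Walk.length_copy]; omega⟩

lemma boxProd_dist_eq (hG : G.Connected) (hH : H.Connected) (x y : α × β) :
    (G □ H).dist x y = G.dist x.1 y.1 + H.dist x.2 y.2 := by
  obtain ⟨x1, x2⟩ := x
  obtain ⟨y1, y2⟩ := y
  dsimp only
  apply le_antisymm
  · obtain ⟨w1, hw1⟩ := hG.exists_walk_length_eq_dist x1 y1
    obtain ⟨w2, hw2⟩ := hH.exists_walk_length_eq_dist x2 y2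
    have hlen : ((w1.boxProdLeft H x2).append (w2.boxProdRight G y1)).length
        = G.dist x1 y1 + H.dist x2 y2 := by
      rw [SimpleGraph.Walk.length_append]
      simp only [SimpleGraph.Walk.boxProdLeft, SimpleGraph.Walk.boxProdRight,
        SimpleGraph.Walk.length_map]
      exact (congrArg₂ (· + ·) (SimpleGraph.Walk.length_map _ w1)
        (SimpleGraph.Walk.length_map _ w2)).trans (by rw [hw1, hw2])
    calc (G □ H).dist (x1, x2) (y1, y2)
        ≤ ((w1.boxProdLeft H x2).append (w2.boxProdRight G y1)).length :=
          SimpleGraph.dist_le _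
    _ = _ := hlen
  · obtain ⟨w, hw⟩ := (hG.boxProd hH).exists_walk_length_eq_dist (x1, x2) (y1, y2)
    obtain ⟨w1, w2, hlen⟩ := boxProd_walk_proj w
    have h1 : G.dist x1 y1 ≤ w1.length := SimpleGraph.dist_le w1
    have h2 : H.dist x2 y2 ≤ w2.length := SimpleGraph.dist_le w2
    simp only at h1 h2 hlen ⊢
    omega

lemma graphDiam_boxProd [Fintype α] [Fintype β] [Nonempty α] [Nonempty β]
    (hG : G.Connected) (hH : H.Connected) :
    graphDiam (G □ H) = graphDiam G + graphDiam H := by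
  apply le_antisymm
  · apply Finset.sup_le
    intro p _
    rw [boxProd_dist_eq hG hH]
    exact Nat.add_le_add (dist_le_graphDiam G _ _) (dist_le_graphDiam H _ _)
  · obtain ⟨pG, _, hpG⟩ := Finset.exists_mem_eq_sup (Finset.univ : Finset (α × α))
      Finset.univ_nonempty (fun p : α × α => G.dist p.1 p.2)
    obtain ⟨pH, _, hpH⟩ := Finset.exists_mem_eq_sup (Finset.univ : Finset (β × β))
      Finset.univ_nonempty (fun p : β × β => H.dist p.1 p.2)
    have hle := dist_le_graphDiam (G □ H) (pG.1, pH.1) (pG.2, pH.2)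
    rw [boxProd_dist_eq hG hH] at hle
    simp only at hle
    have h1 : graphDiam G = G.dist pG.1 pG.2 := hpG
    have h2 : graphDiam H = H.dist pH.1 pH.2 := hpH
    rw [h1, h2]
    exact hle

end BoxProd

end AuxLemmas

/-- Sufficiency in Theorem 3.2: if there is an ordering `z_0, …, z_{2mn-1}` of the vertices
of `P_{m,k} □ T`, `z_t = (x_{i_t}, y_{j_t})`, with (a) `d_{P_{m,k}}(x_{i_t}, x_{i_{t+1}}) = d_p`;
(b) `L_T(y_{j_0}) + L_T(y_{j_{2mn-1}}) = 0`; and (c) for all `a < b`,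
`d_T(y_{j_a}, y_{j_b}) + d_{P_{m,k}}(x_{i_a}, x_{i_b}) ≥
  ∑_{t=a}^{b-1} (L_T(y_{j_t}) + L_T(y_{j_{t+1}}) - d_t - ε) + d_t + d_p + 1`,
then `rn(P_{m,k} □ T) = (2mn - 1)(d_t + ε) - 4m·L(T)`. -/
theorem radioNumber_eq_of_ordering_with_sum_inequality
    {Vt : Type*} [Fintype Vt] (m k n : ℕ) [NeZero m] (hm : 3 ≤ m) (hk : 1 ≤ k)
    (T : SimpleGraph Vt) (hT : T.IsTree) (hn : Fintype.card Vt = n)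
    (o : ℕ → (Bool × ZMod m) × Vt)
    (ho : ∀ v : (Bool × ZMod m) × Vt, ∃! t : ℕ, t < 2 * m * n ∧ o t = v)
    (ha : ∀ t : ℕ, t + 1 < 2 * m * n →
      (genPetersen m k).dist (o t).1 (o (t + 1)).1 = graphDiam (genPetersen m k))
    (hb : level T (o 0).2 + level T (o (2 * m * n - 1)).2 = 0)
    (hc : ∀ a b : ℕ, a < b → b < 2 * m * n →
      (∑ t ∈ Finset.Ico a b,
          ((level T (o t).2 : ℤ) + level T (o (t + 1)).2 - graphDiam T - eps T)) +
          graphDiam T + graphDiam (genPetersen m k) + 1 ≤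
        (T.dist (o a).2 (o b).2 : ℤ) + (genPetersen m k).dist (o a).1 (o b).1) :
    (radioNumber ((genPetersen m k).boxProd T) : ℤ) =
      ((2 * m * n : ℤ) - 1) * ((graphDiam T : ℤ) + eps T) - 4 * m * totalLevel T := by
  classical
  haveI : Nonempty Vt := ⟨(o 0).2⟩
  set P := genPetersen m k with hPdef
  have hPconn : P.Connected := genPetersen_connected hm
  have hTconn : T.Connected := hT.isConnected
  set N := 2 * m * n with hNdef
  have hn1 : 1 ≤ n := hn ▸ Fintype.card_pos
  have hN2 : 2 ≤ N := by
    have h1 : 2 * 3 * 1 ≤ 2 * m * n := Nat.mul_le_mul (Nat.mul_le_mul_left 2 hm) hn1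
    omega
  have hcardV : Fintype.card ((Bool × ZMod m) × Vt) = N := by
    rw [Fintype.card_prod, Fintype.card_prod, Fintype.card_bool, ZMod.card, hn, hNdef]
  set Dp := graphDiam P with hDp
  set Dt := graphDiam T with hDt
  set E := eps T with hE
  have hdist : ∀ u v : (Bool × ZMod m) × Vt,
      (P.boxProd T).dist u v = P.dist u.1 v.1 + T.dist u.2 v.2 :=
    fun u v => boxProd_dist_eq hPconn hTconn u v
  have hDbox : graphDiam (P.boxProd T) = Dp + Dt := graphDiam_boxProd hPconn hTconn
  have hidx0 : ∀ v : (Bool × ZMod m) × Vt, ∃ t, t < N ∧ o t = v := fun v => (ho v).exists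
  choose idx hidx1 hidx2 using hidx0
  have hidx3 : ∀ t, t < N → idx (o t) = t := by
    intro t ht
    exact (ho (o t)).unique ⟨hidx1 _, hidx2 _⟩ ⟨ht, rfl⟩
  set L : ℕ → ℕ := fun t => level T (o t).2 with hLdef
  have hsumVert : ∑ v : (Bool × ZMod m) × Vt, (level T v.2 : ℤ) = 2 * m * totalLevel T := by
    rw [Fintype.sum_prod_type]
    have h1 : ∀ a : Bool × ZMod m, ∑ y : Vt, (level T ((a, y) : (Bool × ZMod m) × Vt).2 : ℤ)
        = (totalLevel T : ℤ) := by
      intro a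
      rw [totalLevel]
      push_cast
      rfl
    rw [Finset.sum_congr rfl fun a _ => h1 a]
    rw [Finset.sum_const, Finset.card_univ, Fintype.card_prod, Fintype.card_bool, ZMod.card,
      nsmul_eq_mul]
    push_cast
    ring
  have hreindex : ∀ F : ((Bool × ZMod m) × Vt) → ℤ,
      ∑ s ∈ Finset.range N, F (o s) = ∑ v, F v := by
    intro F
    refine Finset.sum_nbij' o idx ?_ ?_ ?_ ?_ ?_
    · intro a _; exact Finset.mem_univ _
    · intro v _; rw [Finset.mem_range]; exact hidx1 v
    · intro a ha; exact hidx3 a (Finset.mem_range.mp ha)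
    · intro v _; exact hidx2 v
    · intro a _; rfl
  have hsumL : ∑ s ∈ Finset.range N, (L s : ℤ) = 2 * m * totalLevel T :=
    (hreindex fun v => (level T v.2 : ℤ)).trans hsumVert
  set cc : ℕ → ℤ := fun s => (Dt : ℤ) + E - L s - L (s + 1) with hccdef
  have hcc1 : ∀ s, s + 1 < N → 1 ≤ cc s := by
    intro s hs
    have h := hc s (s + 1) (by omega) hs
    rw [Nat.Ico_succ_singleton, Finset.sum_singleton] at h
    have h1' : (T.dist (o s).2 (o (s + 1)).2 : ℤ) ≤ Dt := by
      exact_mod_cast dist_le_graphDiam T _ _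
    have h2' : (P.dist (o s).1 (o (s + 1)).1 : ℤ) ≤ Dp := by
      exact_mod_cast dist_le_graphDiam P _ _
    simp only [hccdef, hLdef]
    linarith
  set g : ℕ → ℤ := fun t => ∑ s ∈ Finset.range t, cc s with hgdef
  have hgdiff : ∀ a b : ℕ, a ≤ b → g b - g a = ∑ s ∈ Finset.Ico a b, cc s := by
    intro a b hab
    simp only [hgdef]
    rw [Finset.sum_Ico_eq_sub _ hab]
  have hgmono : ∀ a b : ℕ, a ≤ b → b < N → ((b : ℤ) - a) ≤ g b - g a := by
    intro a b hab hbN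
    rw [hgdiff a b hab]
    have h1 : ∀ s ∈ Finset.Ico a b, (1 : ℤ) ≤ cc s := by
      intro s hs
      rw [Finset.mem_Ico] at hs
      exact hcc1 s (by omega)
    have h2 := Finset.sum_le_sum h1
    rw [Finset.sum_const, Nat.card_Ico, nsmul_eq_mul, mul_one] at h2
    have hcast : ((b - a : ℕ) : ℤ) = (b : ℤ) - a := by
      push_cast [Nat.cast_sub hab]; ring
    rw [hcast] at h2
    exact h2
  have hg0 : g 0 = 0 := by simp [hgdef]
  have hgnn : ∀ t, t < N → 0 ≤ g t := by
    intro t ht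
    have h := hgmono 0 t (Nat.zero_le _) ht
    rw [hg0] at h
    have h2 : (0 : ℤ) ≤ (t : ℤ) := Int.natCast_nonneg t
    push_cast at h
    linarith
  have hkey : ∀ a b : ℕ, a < b → b < N →
      (graphDiam (P.boxProd T) : ℤ) + 1 - (P.boxProd T).dist (o a) (o b) ≤ g b - g a := by
    intro a b hab hbN
    have h := hc a b hab hbN
    rw [hgdiff a b hab.le]
    have hneg : ∑ s ∈ Finset.Ico a b, cc s
        = -∑ t ∈ Finset.Ico a b,
            ((level T (o t).2 : ℤ) + level T (o (t + 1)).2 - Dt - E) := by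
      rw [← Finset.sum_neg_distrib]
      exact Finset.sum_congr rfl fun s _ => by simp only [hccdef, hLdef]; ring
    rw [hneg, hDbox, hdist (o a) (o b)]
    push_cast
    linarith
  set f : ((Bool × ZMod m) × Vt) → ℕ := fun v => (g (idx v)).toNat with hfdef
  have hfval : ∀ t, t < N → (f (o t) : ℤ) = g t := by
    intro t ht
    simp only [hfdef]
    rw [hidx3 t ht, Int.toNat_of_nonneg (hgnn t ht)]
  have hkey2 : ∀ u v, idx u < idx v →
      (graphDiam (P.boxProd T) : ℤ) + 1 - (P.boxProd T).dist u v ≤ |(f u : ℤ) - f v| := by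
    intro u v hlt
    have h := hkey (idx u) (idx v) hlt (hidx1 v)
    rw [hidx2 u, hidx2 v] at h
    have hu := hfval (idx u) (hidx1 u)
    rw [hidx2 u] at hu
    have hv := hfval (idx v) (hidx1 v)
    rw [hidx2 v] at hv
    have hmono := hgmono (idx u) (idx v) hlt.le (hidx1 v)
    have hcast : ((idx u : ℕ) : ℤ) < ((idx v : ℕ) : ℤ) := by exact_mod_cast hlt
    rw [hu, hv, abs_sub_comm, abs_of_nonneg (by linarith)]
    linarith
  have hrad : IsRadioLabeling (P.boxProd T) f := by
    intro u v huv
    have hne : idx u ≠ idx v := by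
      intro h; apply huv; rw [← hidx2 u, ← hidx2 v, h]
    rcases lt_or_gt_of_ne hne with h | h
    · exact hkey2 u v h
    · rw [abs_sub_comm, SimpleGraph.dist_comm (u := u) (v := v)]
      exact hkey2 v u h
  set M := (g (N - 1)).toNat with hMdef
  have hN1 : N - 1 < N := by omega
  have hfle : ∀ v, f v ≤ M := by
    intro v
    have h1 : idx v ≤ N - 1 := by have := hidx1 v; omega
    have h2 : g (idx v) ≤ g (N - 1) := by
      rcases eq_or_lt_of_le h1 with h | h
      · rw [h]
      · have h3 := hgmono (idx v) (N - 1) h1 hN1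
        have hcast : ((idx v : ℕ) : ℤ) ≤ ((N - 1 : ℕ) : ℤ) := by exact_mod_cast h1
        linarith
    exact Int.toNat_le_toNat h2
  have hf0 : f (o 0) = 0 := by
    have h := hfval 0 (by omega)
    rw [hg0] at h
    exact_mod_cast h
  have hfM : f (o (N - 1)) = M := by
    have h := hfval (N - 1) hN1
    have h2 : (f (o (N - 1)) : ℤ) = (M : ℤ) := by
      rw [h, hMdef, Int.toNat_of_nonneg (hgnn _ hN1)]
    exact_mod_cast h2
  have hspan : radioSpan f = M := by
    apply le_antisymm
    · apply Finset.sup_le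
      intro p _
      exact le_trans (Nat.sub_le _ _) (hfle p.1)
    · have h := Finset.le_sup (f := fun p : ((Bool × ZMod m) × Vt) × ((Bool × ZMod m) × Vt) =>
        f p.1 - f p.2) (Finset.mem_univ (o (N - 1), o 0))
      simpa [hf0, hfM, radioSpan] using h
  have hmem : M ∈ {s : ℕ | ∃ f, IsRadioLabeling (P.boxProd T) f ∧ radioSpan f = s} :=
    ⟨f, hrad, hspan⟩
  have hLzero : level T (o 0).2 = 0 ∧ level T (o (N - 1)).2 = 0 :=
    ⟨Nat.eq_zero_of_add_eq_zero_right hb, Nat.eq_zero_of_add_eq_zero_left hb⟩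
  have hMz : (M : ℤ) = ((N : ℤ) - 1) * ((Dt : ℤ) + E) - 4 * m * totalLevel T := by
    rw [hMdef, Int.toNat_of_nonneg (hgnn _ hN1)]
    simp only [hgdef, hccdef]
    rw [show (fun s => (Dt : ℤ) + E - L s - L (s + 1)) =
      (fun s => ((Dt : ℤ) + E - L s) - L (s + 1)) from rfl]
    rw [Finset.sum_sub_distrib, Finset.sum_sub_distrib, Finset.sum_const, Finset.card_range]
    have e1 : ∑ s ∈ Finset.range N, (L s : ℤ)
        = (∑ s ∈ Finset.range (N - 1), (L (s + 1) : ℤ)) + (L 0 : ℤ) := by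
      have h := Finset.sum_range_succ' (fun s => (L s : ℤ)) (N - 1)
      rw [show N - 1 + 1 = N by omega] at h
      exact h
    have e2 : ∑ s ∈ Finset.range N, (L s : ℤ)
        = (∑ s ∈ Finset.range (N - 1), (L s : ℤ)) + (L (N - 1) : ℤ) := by
      have h := Finset.sum_range_succ (fun s => (L s : ℤ)) (N - 1)
      rw [show N - 1 + 1 = N by omega] at h
      exact h
    have hL0 : (L 0 : ℤ) = 0 := by simp only [hLdef]; exact_mod_cast hLzero.1
    have hL1 : (L (N - 1) : ℤ) = 0 := by simp only [hLdef]; exact_mod_cast hLzero.2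
    have hcast : ((N - 1 : ℕ) : ℤ) = (N : ℤ) - 1 := by
      push_cast [Nat.cast_sub (by omega : 1 ≤ N)]; ring
    rw [nsmul_eq_mul, hcast]
    rw [hL0] at e1
    rw [hL1] at e2
    have hsum := hsumL
    linarith
  have hlow : ∀ s ∈ {s : ℕ | ∃ f, IsRadioLabeling (P.boxProd T) f ∧ radioSpan f = s},
      M ≤ s := by
    rintro s ⟨f', hrad', rfl⟩
    have hinj : Function.Injective f' := by
      intro u v huv
      by_contra hne
      have h := hrad' u v hne
      rw [huv] at h
      simp only [sub_self, abs_zero] at h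
      have hd : ((P.boxProd T).dist u v : ℤ) ≤ (graphDiam (P.boxProd T) : ℤ) := by
        exact_mod_cast dist_le_graphDiam (P.boxProd T) u v
      linarith
    letI : LinearOrder ((Bool × ZMod m) × Vt) := LinearOrder.lift' f' hinj
    set σ := monoEquivOfFin ((Bool × ZMod m) × Vt) hcardV with hσ
    set uu : ℕ → ((Bool × ZMod m) × Vt) :=
      fun t => σ ⟨t % N, Nat.mod_lt _ (by omega)⟩ with huu
    have huut : ∀ t (ht : t < N), uu t = σ ⟨t, ht⟩ := by
      intro t ht
      simp only [huu]
      congr 1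
      exact Fin.ext (Nat.mod_eq_of_lt ht)
    have humono : ∀ a b : ℕ, a ≤ b → b < N → f' (uu a) ≤ f' (uu b) := by
      intro a b hab hbN
      rw [huut a (by omega), huut b hbN]
      have h : σ ⟨a, by omega⟩ ≤ σ ⟨b, hbN⟩ := σ.monotone (by exact hab)
      exact h
    have huinj : ∀ a b, a < N → b < N → uu a = uu b → a = b := by
      intro a b haN hbN h
      rw [huut a haN, huut b hbN] at h
      have h2 := σ.injective h
      exact congrArg Fin.val h2
    have hureindex : ∑ t ∈ Finset.range N, (level T (uu t).2 : ℤ) = 2 * m * totalLevel T := by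
      refine Eq.trans ?_ hsumVert
      refine Finset.sum_nbij' uu (fun v => ((σ.symm v : Fin N) : ℕ)) ?_ ?_ ?_ ?_ ?_
      · intro a _; exact Finset.mem_univ _
      · intro v _; rw [Finset.mem_range]; exact (σ.symm v).isLt
      · intro a ha
        show ((σ.symm (uu a) : Fin N) : ℕ) = a
        rw [huut a (Finset.mem_range.mp ha), OrderIso.symm_apply_apply]
      · intro v _
        show uu ((σ.symm v : Fin N) : ℕ) = v
        rw [huut _ (σ.symm v).isLt]
        rw [show (⟨((σ.symm v : Fin N) : ℕ), (σ.symm v).isLt⟩ : Fin N) = σ.symm v from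
          Fin.ext rfl]
        exact σ.apply_symm_apply v
      · intro a _; rfl
    have hgap : ∀ t, t + 1 < N →
        (Dt : ℤ) + E - level T (uu t).2 - level T (uu (t + 1)).2
          ≤ (f' (uu (t + 1)) : ℤ) - f' (uu t) := by
      intro t ht
      have hne : uu t ≠ uu (t + 1) := by
        intro h
        have := huinj t (t + 1) (by omega) ht h
        omega
      have h := hrad' (uu t) (uu (t + 1)) hne
      have hmono := humono t (t + 1) (by omega) ht
      have hmono' : (f' (uu t) : ℤ) ≤ f' (uu (t + 1)) := by exact_mod_cast hmono
      rw [abs_sub_comm, abs_of_nonneg (by linarith)] at h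
      have hdd := hdist (uu t) (uu (t + 1))
      have hP' : (P.dist (uu t).1 (uu (t + 1)).1 : ℤ) ≤ Dp := by
        exact_mod_cast dist_le_graphDiam P _ _
      have hTd := dist_le_level_add hT (uu t).2 (uu (t + 1)).2
      rw [← hE] at hTd
      rw [hDbox, hdd] at h
      push_cast at h
      linarith
    have htel : (f' (uu (N - 1)) : ℤ) - f' (uu 0)
        = ∑ t ∈ Finset.range (N - 1), ((f' (uu (t + 1)) : ℤ) - f' (uu t)) :=
      (Finset.sum_range_sub (fun t => (f' (uu t) : ℤ)) (N - 1)).symm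
    have hsum2 : ∑ t ∈ Finset.range (N - 1),
        ((Dt : ℤ) + E - level T (uu t).2 - level T (uu (t + 1)).2)
          ≤ ∑ t ∈ Finset.range (N - 1), ((f' (uu (t + 1)) : ℤ) - f' (uu t)) := by
      refine Finset.sum_le_sum fun t ht' => ?_
      exact hgap t (by have := Finset.mem_range.mp ht'; omega)
    have hcompute : (M : ℤ) ≤ ∑ t ∈ Finset.range (N - 1),
        ((Dt : ℤ) + E - level T (uu t).2 - level T (uu (t + 1)).2) := by
      rw [show (fun t => (Dt : ℤ) + E - level T (uu t).2 - level T (uu (t + 1)).2) =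
        (fun t => ((Dt : ℤ) + E - level T (uu t).2) - level T (uu (t + 1)).2) from rfl]
      rw [Finset.sum_sub_distrib, Finset.sum_sub_distrib, Finset.sum_const, Finset.card_range]
      have e1 : ∑ s ∈ Finset.range N, (level T (uu s).2 : ℤ)
          = (∑ s ∈ Finset.range (N - 1), (level T (uu (s + 1)).2 : ℤ))
            + (level T (uu 0).2 : ℤ) := by
        have h := Finset.sum_range_succ' (fun s => (level T (uu s).2 : ℤ)) (N - 1)
        rw [show N - 1 + 1 = N by omega] at h
        exact h
      have e2 : ∑ s ∈ Finset.range N, (level T (uu s).2 : ℤ)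
          = (∑ s ∈ Finset.range (N - 1), (level T (uu s).2 : ℤ))
            + (level T (uu (N - 1)).2 : ℤ) := by
        have h := Finset.sum_range_succ (fun s => (level T (uu s).2 : ℤ)) (N - 1)
        rw [show N - 1 + 1 = N by omega] at h
        exact h
      have hnn0 : (0 : ℤ) ≤ (level T (uu 0).2 : ℤ) := Int.natCast_nonneg _
      have hnn1 : (0 : ℤ) ≤ (level T (uu (N - 1)).2 : ℤ) := Int.natCast_nonneg _
      have hcast : ((N - 1 : ℕ) : ℤ) = (N : ℤ) - 1 := by
        push_cast [Nat.cast_sub (by omega : 1 ≤ N)]; ring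
      rw [nsmul_eq_mul, hcast, hMz]
      linarith [hureindex]
    have hmono0 := humono 0 (N - 1) (by omega) hN1
    have hfin : (M : ℤ) ≤ (radioSpan f' : ℤ) := by
      have h1 : f' (uu (N - 1)) - f' (uu 0) ≤ radioSpan f' :=
        Finset.le_sup (f := fun p : ((Bool × ZMod m) × Vt) × ((Bool × ZMod m) × Vt) =>
          f' p.1 - f' p.2) (Finset.mem_univ (uu (N - 1), uu 0))
      have hnatsub : ((f' (uu (N - 1)) - f' (uu 0) : ℕ) : ℤ)
          = (f' (uu (N - 1)) : ℤ) - f' (uu 0) := by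
        omega
      have h2 : ((f' (uu (N - 1)) - f' (uu 0) : ℕ) : ℤ) ≤ (radioSpan f' : ℤ) := by
        exact_mod_cast h1
      rw [hnatsub] at h2
      have h3 : (M : ℤ) ≤ (f' (uu (N - 1)) : ℤ) - f' (uu 0) := by
        rw [htel]
        linarith
      linarith
    exact_mod_cast hfin
  have hrn : radioNumber (P.boxProd T) = M :=
    le_antisymm (Nat.sInf_le hmem) (le_csInf ⟨M, hmem⟩ hlow)
  have hNcast : (N : ℤ) = 2 * m * n := by rw [hNdef]; push_cast; ring
  rw [hrn, hMz, hNcast]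

end RadioPaper
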